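/- In the setting of the transform $F \mapsto F'$ of a reduced Steiner bundle $F$ at a jumping pair $(\alpha, H)$: every jumping hyperplane of $F$ is either a jumping hyperplane of $F'$ or lies in $\pi_2(\pi_1^{-1}(\alpha))$; that is, $J(F) \subseteq J(F') \cup \pi_2(\pi_1^{-1}(\alpha))$, where $\pi_1, \pi_2$ are the projections of $\tilde{J}(F) \subseteq \mathbb{P}(S) \times (\mathbb{P}^n)^*$. Concretely: if $(\alpha_1, H_1)$ is a jumping pair of $F$ with $\alpha_1 \neq \alpha$, represented by a rank-one tensor $v_1 \otimes h_1 \in \mathrm{Im}\,\varphi$, then $i^*(v_1) \otimes h_1$ is a nonzero element of $\mathrm{Im}\,\varphi'$, so $([i^*(v_1)], H_1)$ is a jumping pair of $F'$. -/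
import Mathlib


open Module

variable {k : Type*} [Field k]

/-- The linear map `φ : T* → Hom(H⁰(O(1))*, S*)`, `φ g = (u ↦ g ∘ μ u)`, associated to
the resolution datum `μ : H⁰(O(1))* → Hom(S,T)` of a Steiner bundle on `ℙⁿ`. -/
noncomputable def steinerDual {S T : Type*} [AddCommGroup S] [Module k S]
    [AddCommGroup T] [Module k T] {n : ℕ}
    (μ : (Fin (n + 1) → k) →ₗ[k] (S →ₗ[k] T)) :
    (T →ₗ[k] k) →ₗ[k] ((Fin (n + 1) → k) →ₗ[k] (S →ₗ[k] k)) where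
  toFun g :=
    { toFun := fun u => g.comp (μ u)
      map_add' := fun u₁ u₂ => by ext x; simp
      map_smul' := fun c u => by ext x; simp }
  map_add' g₁ g₂ := by ext u x; simp
  map_smul' c g := by ext u x; simp

/-- **Proposition (transform)(iii).**  Let `F` be a reduced `(s,t)`-Steiner bundle on
`ℙⁿ` with datum `μ` and dual map `φ = steinerDual μ`, let `(α, H)` be a jumping pair
of `F` (`α = [v]`, `H = {h = 0}`, `φ g₀ = h ⊗ v`), and let `F'` be the associated
`(s-1, t-1)`-Steiner bundle, with datum `μ'` the restriction of `μ` to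
`S' = ker v → T' = ker g₀` and dual map `φ' = steinerDual μ'`.  Then
`J(F) ⊆ J(F') ∪ π₂(π₁⁻¹(α))`; concretely, if `(α₁, H₁)` is a jumping pair of `F` with
`α₁ ≠ α` — that is, `φ g₁ = h₁ ⊗ v₁` is a rank-one tensor in `Im φ` with `v₁` not
proportional to `v` — then `i*(v₁) = v₁|_{S'}` is nonzero and
`φ'(j* g₁) = h₁ ⊗ i*(v₁)` is a nonzero element of `Im φ'`, so that
`([i*(v₁)], H₁)` is a jumping pair of `F'` and `H₁` is a jumping hyperplane of
`F'`. -/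
theorem steiner_transform_jumping {S T : Type*} [IsAlgClosed k]
    [AddCommGroup S] [Module k S] [FiniteDimensional k S]
    [AddCommGroup T] [Module k T] [FiniteDimensional k T]
    {n s t : ℕ} (hs : 2 ≤ s) (hS : finrank k S = s) (hT : finrank k T = t)
    (μ : (Fin (n + 1) → k) →ₗ[k] (S →ₗ[k] T))
    (hsteiner : ∀ u : Fin (n + 1) → k, u ≠ 0 → Function.Injective (μ u))
    (hreduced : Function.Injective (steinerDual μ))
    (v : S →ₗ[k] k) (hv : v ≠ 0)
    (h : (Fin (n + 1) → k) →ₗ[k] k) (hh : h ≠ 0)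
    (g₀ : T →ₗ[k] k) (hg₀ : steinerDual μ g₀ = h.smulRight v)
    (μ' : (Fin (n + 1) → k) →ₗ[k] (↥(LinearMap.ker v) →ₗ[k] ↥(LinearMap.ker g₀)))
    (hμ' : ∀ (u : Fin (n + 1) → k) (x : ↥(LinearMap.ker v)),
      ((μ' u x : T) = μ u (x : S)))
    (v₁ : S →ₗ[k] k) (hv₁ : v₁ ≠ 0)
    (h₁ : (Fin (n + 1) → k) →ₗ[k] k) (hh₁ : h₁ ≠ 0)
    (g₁ : T →ₗ[k] k) (hg₁ : steinerDual μ g₁ = h₁.smulRight v₁)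
    (hne : ∀ c : k, v₁ ≠ c • v) :
    v₁.comp (LinearMap.ker v).subtype ≠ 0
    ∧ steinerDual μ' (g₁.comp (LinearMap.ker g₀).subtype)
        = h₁.smulRight (v₁.comp (LinearMap.ker v).subtype) := by
  constructor
  · intro hz
    have hker : LinearMap.ker v ≤ LinearMap.ker v₁ := by
      intro x hx
      have := LinearMap.congr_fun hz ⟨x, hx⟩
      simpa using this
    have : v₁ ∈ Submodule.span k (Set.range (fun _ : Unit => v)) :=
      mem_span_of_iInf_ker_le_ker (by simpa using hker)
    rw [Set.range_const, Submodule.mem_span_singleton] at this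
    obtain ⟨c, hc⟩ := this
    exact hne c hc.symm
  · refine LinearMap.ext fun u => LinearMap.ext fun x => ?_
    have := LinearMap.congr_fun (LinearMap.congr_fun hg₁ u) (x : S)
    simp only [steinerDual, LinearMap.coe_mk, AddHom.coe_mk, LinearMap.comp_apply,
      LinearMap.smulRight_apply, smul_eq_mul, Submodule.coe_subtype,
      LinearMap.smul_apply] at this ⊢
    rw [hμ' u x, this]
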